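/- Let R be a ℚ-algebra and f, g, h ∈ R((u))((t))* with (ν₁,ν₂)(f) = (0,0), f₀ = 1, and similarly for g, so that log f and log g are defined. Then Res(log f · (dg/g) ∧ (dh/h)) = − Res(log g · (df/f) ∧ (dh/h)); i.e. the exponential-residue expression is antisymmetric in its first two arguments. -/

import Mathlib

noncomputable section

namespace CC

variable {R : Type*} [CommRing R]

/-- Formal derivative of a Laurent series. -/
def DerivT (f : LaurentSeries R) : LaurentSeries R where
  coeff n := (n + 1) • f.coeff (n + 1)
  isPWO_support' := by
    have hsub : Function.support (fun n : ℤ => (n + 1) • f.coeff (n + 1)) ⊆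
        (fun n : ℤ => n - 1) '' Function.support f.coeff := by
      intro n hn
      have h1 : (n + 1) • f.coeff (n + 1) ≠ 0 := hn
      have h2 : f.coeff (n + 1) ≠ 0 := fun h => h1 (by rw [h, smul_zero])
      exact ⟨n + 1, h2, by ring⟩
    have hmono : Monotone fun n : ℤ => n - 1 := fun a b h => by dsimp only; omega
    exact (Set.IsPWO.image_of_monotoneOn f.isPWO_support' (hmono.monotoneOn _)).mono hsub

@[simp] lemma DerivT_coeff (f : LaurentSeries R) (n : ℤ) :
    (DerivT f).coeff n = (n + 1) • f.coeff (n + 1) := rfl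

lemma DerivT_zero : DerivT (0 : LaurentSeries R) = 0 := by
  ext n
  simp

/-- Partial derivative in the inner variable `u` of an iterated Laurent series. -/
def DerivU (f : LaurentSeries (LaurentSeries R)) : LaurentSeries (LaurentSeries R) where
  coeff s := DerivT (f.coeff s)
  isPWO_support' := by
    refine f.isPWO_support'.mono ?_
    intro s hs
    have h1 : DerivT (f.coeff s) ≠ 0 := hs
    exact fun h => h1 (by rw [h, DerivT_zero])

/-- Two-dimensional residue: the coefficient of `u⁻¹t⁻¹ du∧dt`. -/
def Res2 (x : LaurentSeries (LaurentSeries R)) : R := (x.coeff (-1)).coeff (-1)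

/-- `y ∈ 𝔭(R)`: supported in bidegrees `< (0,0)` lexicographically, nilpotent coefficients. -/
def InPP (y : LaurentSeries (LaurentSeries R)) : Prop :=
  (∀ s : ℤ, 0 < s → y.coeff s = 0) ∧
  (∀ w : ℤ, 0 ≤ w → (y.coeff 0).coeff w = 0) ∧
  (∀ s w : ℤ, IsNilpotent ((y.coeff s).coeff w))

/-- `y ∈ 𝔪(R)`: supported in bidegrees `> (0,0)` lexicographically. -/
def InMM (y : LaurentSeries (LaurentSeries R)) : Prop :=
  (∀ s : ℤ, s < 0 → y.coeff s = 0) ∧ (∀ w : ℤ, w ≤ 0 → (y.coeff 0).coeff w = 0)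

/-- `L` is the logarithm of the unit `f`: `dL = df/f` (for both partial derivatives) and the
`(0,0)` bi-coefficient of `L` vanishes. -/
def IsLogOf (f : (LaurentSeries (LaurentSeries R))ˣ)
    (L : LaurentSeries (LaurentSeries R)) : Prop :=
  DerivT L = DerivT (f : LaurentSeries (LaurentSeries R)) *
      ((f⁻¹ : (LaurentSeries (LaurentSeries R))ˣ) : LaurentSeries (LaurentSeries R)) ∧
  DerivU L = DerivU (f : LaurentSeries (LaurentSeries R)) *
      ((f⁻¹ : (LaurentSeries (LaurentSeries R))ˣ) : LaurentSeries (LaurentSeries R)) ∧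
  (L.coeff 0).coeff 0 = 0

/-- The `du∧dt`-coefficient of `dx/x ∧ dy/y` for units `x`, `y`. -/
def WedgeLog (x y : (LaurentSeries (LaurentSeries R))ˣ) :
    LaurentSeries (LaurentSeries R) :=
  (DerivU (x : LaurentSeries (LaurentSeries R)) * ((x⁻¹ : _ˣ) : LaurentSeries (LaurentSeries R))) *
      (DerivT (y : LaurentSeries (LaurentSeries R)) * ((y⁻¹ : _ˣ) : LaurentSeries (LaurentSeries R))) -
    (DerivU (y : LaurentSeries (LaurentSeries R)) * ((y⁻¹ : _ˣ) : LaurentSeries (LaurentSeries R))) *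
      (DerivT (x : LaurentSeries (LaurentSeries R)) * ((x⁻¹ : _ˣ) : LaurentSeries (LaurentSeries R)))


/-! Put `ω = log f · log g · dh/h`. Since `dh/h` is closed and `d log = dlog`,
`dω = (log g · df/f + log f · dg/g) ∧ dh/h`, which is the sum of the two integrands.
The residue of an exact 2-form `d(a du + b dt)` vanishes, as `∂/∂u` and `∂/∂t` kill
the `u⁻¹t⁻¹` coefficient. -/

section DerivationLemmas

variable {A : Type*} [CommRing A]

lemma _root_.Derivation.map_units_inv (D : Derivation ℤ A A) (u : Aˣ) :
    D ↑u⁻¹ = -(↑u⁻¹ * (D u * ↑u⁻¹)) := by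
  rw [D.leibniz_of_mul_eq_one u.inv_mul, smul_eq_mul]
  ring

/-- The 1-form `du/u` is closed. -/
lemma _root_.Derivation.map_logDeriv_comm (D₁ D₂ : Derivation ℤ A A)
    (hcomm : ∀ a, D₁ (D₂ a) = D₂ (D₁ a)) (u : Aˣ) :
    D₁ (D₂ u * ↑u⁻¹) = D₂ (D₁ u * ↑u⁻¹) := by
  simp only [Derivation.leibniz, smul_eq_mul, Derivation.map_units_inv, hcomm]
  ring

/-- `d(a b ω) = (b da + a db) ∧ ω` for a closed 1-form `ω = q du + p dt`, written out in the
`du ∧ dt` coordinate with `D₁ = ∂/∂u`, `D₂ = ∂/∂t`. -/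
lemma _root_.Derivation.mul_wedge_add_mul_wedge_of_closed (D₁ D₂ : Derivation ℤ A A)
    (a b p q : A) (hclosed : D₁ q = D₂ p) :
    a * (D₁ b * q - p * D₂ b) + b * (D₁ a * q - p * D₂ a) =
      D₁ (a * b * q) - D₂ (a * b * p) := by
  simp only [Derivation.leibniz, smul_eq_mul, hclosed]
  ring

def _root_.Derivation.mkOfLeibniz (D : A →+ A)
    (hD : ∀ a b, D (a * b) = D a * b + a * D b) : Derivation ℤ A A :=
  Derivation.mk' D.toIntLinearMap fun a b => by
    simp only [AddMonoidHom.coe_toIntLinearMap, hD, smul_eq_mul]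
    ring

@[simp] lemma _root_.Derivation.mkOfLeibniz_apply (D : A →+ A)
    (hD : ∀ a b, D (a * b) = D a * b + a * D b) (a : A) : Derivation.mkOfLeibniz D hD a = D a :=
  rfl

end DerivationLemmas

/-- The Euler operator `t d/dt`. -/
def eulerT (f : LaurentSeries R) : LaurentSeries R where
  coeff n := n • f.coeff n
  isPWO_support' := f.isPWO_support'.mono fun n hn h => hn (by simp only [h, smul_zero])

@[simp] lemma coeff_eulerT (f : LaurentSeries R) (n : ℤ) :
    (eulerT f).coeff n = n • f.coeff n := rfl

lemma support_eulerT_subset (f : LaurentSeries R) : (eulerT f).support ⊆ f.support :=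
  fun n hn h => hn (by rw [coeff_eulerT, h, smul_zero])

lemma eulerT_mul (a b : LaurentSeries R) : eulerT (a * b) = eulerT a * b + a * eulerT b := by
  ext n
  rw [HahnSeries.coeff_add, coeff_eulerT, HahnSeries.coeff_mul,
    HahnSeries.coeff_mul_left' a.isPWO_support (support_eulerT_subset a),
    HahnSeries.coeff_mul_right' b.isPWO_support (support_eulerT_subset b),
    Finset.smul_sum, ← Finset.sum_add_distrib]
  refine Finset.sum_congr rfl fun ij hij => ?_
  rw [coeff_eulerT, coeff_eulerT, ← (Finset.mem_antidiagonal.mp hij).2.2, add_smul,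
    smul_mul_assoc, mul_smul_comm]

lemma DerivT_eq_single_mul_eulerT (f : LaurentSeries R) :
    DerivT f = HahnSeries.single (-1 : ℤ) (1 : R) * eulerT f := by
  ext n
  rw [DerivT_coeff, show n = (n + 1) + -1 by ring, HahnSeries.coeff_single_mul_add, one_mul,
    coeff_eulerT]
  ring_nf

lemma DerivT_mul (a b : LaurentSeries R) :
    DerivT (a * b) = DerivT a * b + a * DerivT b := by
  simp only [DerivT_eq_single_mul_eulerT, eulerT_mul]
  ring

lemma DerivT_add (a b : LaurentSeries R) : DerivT (a + b) = DerivT a + DerivT b := by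
  ext n
  simp [smul_add]

-- No type ascription here or in `derivationU`: synthesis finds the instance
-- `HahnSeries.powerSeriesAlgebra ℤ R : Algebra ℤ (LaurentSeries R)`, which is not defeq to the
-- `Ring.toIntAlgebra` that `Derivation.mkOfLeibniz` and the lemmas above use.
def derivationT :=
  Derivation.mkOfLeibniz (AddMonoidHom.mk' (DerivT (R := R)) DerivT_add) DerivT_mul

@[simp] lemma derivationT_apply (f : LaurentSeries R) : derivationT f = DerivT f := rfl

@[simp] lemma DerivU_coeff (f : LaurentSeries (LaurentSeries R)) (s : ℤ) :
    (DerivU f).coeff s = DerivT (f.coeff s) := rfl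

lemma support_DerivU_subset (f : LaurentSeries (LaurentSeries R)) :
    (DerivU f).support ⊆ f.support :=
  fun s hs h => hs (by rw [DerivU_coeff, h, DerivT_zero])

lemma DerivU_add (a b : LaurentSeries (LaurentSeries R)) :
    DerivU (a + b) = DerivU a + DerivU b := by
  ext s : 2
  simp [DerivT_add]

lemma DerivU_mul (a b : LaurentSeries (LaurentSeries R)) :
    DerivU (a * b) = DerivU a * b + a * DerivU b := by
  ext s : 2
  rw [DerivU_coeff, HahnSeries.coeff_add, HahnSeries.coeff_mul,
    HahnSeries.coeff_mul_left' a.isPWO_support (support_DerivU_subset a),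
    HahnSeries.coeff_mul_right' b.isPWO_support (support_DerivU_subset b),
    ← Finset.sum_add_distrib]
  simp only [← derivationT_apply, map_sum, Derivation.leibniz, smul_eq_mul, DerivU_coeff]
  exact Finset.sum_congr rfl fun _ _ => by ring

def derivationU :=
  Derivation.mkOfLeibniz (AddMonoidHom.mk' (DerivU (R := R)) DerivU_add) DerivU_mul

@[simp] lemma derivationU_apply (f : LaurentSeries (LaurentSeries R)) :
    derivationU f = DerivU f := rfl

lemma DerivU_DerivT_comm (x : LaurentSeries (LaurentSeries R)) :
    DerivU (DerivT x) = DerivT (DerivU x) := by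
  ext s n
  simp only [DerivU_coeff, DerivT_coeff, HahnSeries.coeff_smul]
  exact smul_comm _ _ _

lemma Res2_sub (x y : LaurentSeries (LaurentSeries R)) : Res2 (x - y) = Res2 x - Res2 y := by
  simp [Res2]

lemma Res2_add (x y : LaurentSeries (LaurentSeries R)) : Res2 (x + y) = Res2 x + Res2 y := by
  simp [Res2]

lemma Res2_DerivU (x : LaurentSeries (LaurentSeries R)) : Res2 (DerivU x) = 0 := by
  simp [Res2]

lemma Res2_DerivT (x : LaurentSeries (LaurentSeries R)) : Res2 (DerivT x) = 0 := by
  simp [Res2]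

theorem res_log_antisymm_general
    (f g h : (LaurentSeries (LaurentSeries R))ˣ)
    (Lf Lg : LaurentSeries (LaurentSeries R))
    (hLf : IsLogOf f Lf) (hLg : IsLogOf g Lg) :
    Res2 (Lf * WedgeLog g h) = -Res2 (Lg * WedgeLog f h) := by
  set H := (h : LaurentSeries (LaurentSeries R))
  set H' := ((h⁻¹ : _ˣ) : LaurentSeries (LaurentSeries R))
  have hclosed : DerivU (DerivT H * H') = DerivT (DerivU H * H') :=
    derivationU.map_logDeriv_comm derivationT DerivU_DerivT_comm h
  have hexact : Lf * WedgeLog g h + Lg * WedgeLog f h =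
      DerivU (Lf * Lg * (DerivT H * H')) - DerivT (Lf * Lg * (DerivU H * H')) := by
    rw [WedgeLog, WedgeLog, ← hLf.1, ← hLf.2.1, ← hLg.1, ← hLg.2.1]
    exact derivationU.mul_wedge_add_mul_wedge_of_closed derivationT _ _ _ _ hclosed
  rw [eq_neg_iff_add_eq_zero, ← Res2_add, hexact, Res2_sub, Res2_DerivU, Res2_DerivT, sub_zero]

/-- **Antisymmetry of the exponential-residue expression in its first two arguments.**
Let `R` be a `ℚ`-algebra and `f, g, h ∈ R((u))((t))*` with `(ν₁,ν₂)(f) = (0,0)`, `f₀ = 1`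
(i.e. `f = f₋₁·f₁` with `f₋₁ ∈ 1 + 𝔭(R)`, `f₁ ∈ 1 + 𝔪(R)`), and similarly for `g`, so that
`log f` and `log g` are defined.  Then
`Res(log f · (dg/g) ∧ (dh/h)) = −Res(log g · (df/f) ∧ (dh/h))`. -/
theorem res_log_antisymm [Algebra ℚ R]
    (f g h : (LaurentSeries (LaurentSeries R))ˣ)
    (hfshape : ∃ fm fp : LaurentSeries (LaurentSeries R),
      InPP (fm - 1) ∧ InMM (fp - 1) ∧ (f : LaurentSeries (LaurentSeries R)) = fm * fp)
    (hgshape : ∃ gm gp : LaurentSeries (LaurentSeries R),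
      InPP (gm - 1) ∧ InMM (gp - 1) ∧ (g : LaurentSeries (LaurentSeries R)) = gm * gp)
    (Lf Lg : LaurentSeries (LaurentSeries R))
    (hLf : IsLogOf f Lf) (hLg : IsLogOf g Lg) :
    Res2 (Lf * WedgeLog g h) = -Res2 (Lg * WedgeLog f h) :=
  res_log_antisymm_general f g h Lf Lg hLf hLg

end CC
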